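/- arXiv:1103.0447 — 2 statements merged into one kernel-verified Lean document; each statement's English description precedes it below -/
import Mathlib

section
/- For each prime p in the set {5, 13, 37} and each integer x with 0 ≤ x ≤ (p-3)/2, the value F_p(x) = 2x² + 2x + (p+1)/2 is a prime number. Consequently, since F_p(x+1) - F_p(x) = 4(x+1), these primes form a regular ((p-1)/2)-plet with consecutive distances 4(x+1). -/
theorem two_mul_sq_add_two_mul_add_succ_sub (c x : ℕ) :
    (2 * (x + 1) ^ 2 + 2 * (x + 1) + c) - (2 * x ^ 2 + 2 * x + c) = 4 * (x + 1) := by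
  rw [show 2 * (x + 1) ^ 2 + 2 * (x + 1) + c = (2 * x ^ 2 + 2 * x + c) + 4 * (x + 1) by ring]
  exact Nat.add_sub_cancel_left _ _

-- `c = (p + 1) / 2` for `p = 5, 13, 37`, and then `c - 2 = (p - 3) / 2`.
theorem prime_two_mul_sq_add_two_mul_add {c : ℕ} (hc : c ∈ ({3, 7, 19} : Set ℕ))
    {x : ℕ} (hx : x ≤ c - 2) : (2 * x ^ 2 + 2 * x + c).Prime := by
  rcases hc with rfl | rfl | rfl <;> interval_cases x <;> norm_num

/-- For each prime `p ∈ {5, 13, 37}` and each `0 ≤ x ≤ (p-3)/2`,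
the value `F_p(x) = 2*x² + 2*x + (p+1)/2` is prime; moreover
`F_p(x+1) - F_p(x) = 4*(x+1)`, so these primes form a regular `(p-1)/2`-plet with
consecutive distances `4*(x+1)`. -/
theorem stmt_17 :
    ∀ p ∈ ({5, 13, 37} : Set ℕ),
      (∀ x : ℕ, x ≤ (p - 3) / 2 → Nat.Prime (2 * x ^ 2 + 2 * x + (p + 1) / 2)) ∧
      (∀ x : ℕ, (2 * (x + 1) ^ 2 + 2 * (x + 1) + (p + 1) / 2)
          - (2 * x ^ 2 + 2 * x + (p + 1) / 2) = 4 * (x + 1)) := by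
  intro p hp
  have hc : (p + 1) / 2 ∈ ({3, 7, 19} : Set ℕ) := by rcases hp with rfl | rfl | rfl <;> simp
  have hx : (p - 3) / 2 = (p + 1) / 2 - 2 := by rcases hp with rfl | rfl | rfl <;> rfl
  exact ⟨fun x hx' => prime_two_mul_sq_add_two_mul_add hc (hx ▸ hx'),
    fun x => two_mul_sq_add_two_mul_add_succ_sub _ x⟩
end

section
/- The following cubic polynomials take prime values at every integer in the indicated range: C₃(x) = x³ - x² + 2x + 5 is prime for 0 ≤ x ≤ 4; C₄(x) = 2x³ + 4x² - 4x + 5 is prime for 0 ≤ x ≤ 4; C₅(x) = x³ - x² + 6x + 7 is prime for 0 ≤ x ≤ 6; C₆(x) = x³ + 5x² + 2x + 11 is prime for 0 ≤ x ≤ 10; C₇(x) = x³ - 4x² + 5x + 11 is prime for 0 ≤ x ≤ 10; and C₈(x) = x³ - 5x² + 8x + 13 is prime for 0 ≤ x ≤ 12. -/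
/-- The cubic polynomials `C₃(x) = x³ - x² + 2x + 5` (for `0 ≤ x ≤ 4`),
`C₄(x) = 2x³ + 4x² - 4x + 5` (for `0 ≤ x ≤ 4`), `C₅(x) = x³ - x² + 6x + 7`
(for `0 ≤ x ≤ 6`), `C₆(x) = x³ + 5x² + 2x + 11` (for `0 ≤ x ≤ 10`),
`C₇(x) = x³ - 4x² + 5x + 11` (for `0 ≤ x ≤ 10`) and `C₈(x) = x³ - 5x² + 8x + 13`
(for `0 ≤ x ≤ 12`) take prime values at every integer in the indicated range. -/
theorem stmt_19 :
    (∀ x : ℤ, 0 ≤ x → x ≤ 4 → Prime (x ^ 3 - x ^ 2 + 2 * x + 5)) ∧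
    (∀ x : ℤ, 0 ≤ x → x ≤ 4 → Prime (2 * x ^ 3 + 4 * x ^ 2 - 4 * x + 5)) ∧
    (∀ x : ℤ, 0 ≤ x → x ≤ 6 → Prime (x ^ 3 - x ^ 2 + 6 * x + 7)) ∧
    (∀ x : ℤ, 0 ≤ x → x ≤ 10 → Prime (x ^ 3 + 5 * x ^ 2 + 2 * x + 11)) ∧
    (∀ x : ℤ, 0 ≤ x → x ≤ 10 → Prime (x ^ 3 - 4 * x ^ 2 + 5 * x + 11)) ∧
    (∀ x : ℤ, 0 ≤ x → x ≤ 12 → Prime (x ^ 3 - 5 * x ^ 2 + 8 * x + 13)) := by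
  refine ⟨?_, ?_, ?_, ?_, ?_, ?_⟩ <;>
    (intro x h1 h2; interval_cases x <;> norm_num)
end
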